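/- Let G ⊆ ℂⁿ be a domain and f₁, f₂ : G → ℂ functions with f₁(z) ≠ 0 for all z ∈ G. Then the following are equivalent: (i) −1 does not belong to the closure of the image (f₂/f₁)(G); (ii) there exists c₀ > 0 such that |f₁(z) + f₂(z)| ≥ c₀(|f₁(z)| + |f₂(z)|) for all z ∈ G. -/

import Mathlib

/-!
Writing `w = f₂ / f₁`, both sides of the inequality scale by `‖f₁‖`, so it reads
`c (1 + ‖w‖) ≤ ‖1 + w‖`. Since `‖w‖ ≤ ‖1 + w‖ + 1`, such a bound holds on a set iff `‖1 + w‖`,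
the distance from `w` to `-1`, is bounded below on it, i.e. iff `-1` is not in its closure.
-/

section NormedGroup

variable {E : Type*} [SeminormedAddCommGroup E]

theorem neg_notMem_closure_iff_exists_le_norm_add (v : E) (S : Set E) :
    -v ∉ closure S ↔ ∃ δ > (0 : ℝ), ∀ w ∈ S, δ ≤ ‖v + w‖ := by
  simp only [Metric.mem_closure_iff, dist_eq_norm, not_forall, not_exists, not_and, not_lt,
    exists_prop]
  exact exists_congr fun δ => and_congr_right fun _ =>
    forall₂_congr fun w _ => by rw [← norm_neg, neg_sub, sub_neg_eq_add, add_comm]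

theorem neg_notMem_closure_iff_exists_mul_norm_add_le {v : E} (hv : 0 < ‖v‖) (S : Set E) :
    -v ∉ closure S ↔ ∃ c > (0 : ℝ), ∀ w ∈ S, c * (‖v‖ + ‖w‖) ≤ ‖v + w‖ := by
  rw [neg_notMem_closure_iff_exists_le_norm_add]
  constructor
  · rintro ⟨δ, hδ, hS⟩
    -- `‖v‖ + ‖w‖ ≤ ‖v + w‖ + 2‖v‖ ≤ (1 + 2‖v‖ / δ) ‖v + w‖`
    refine ⟨δ / (δ + 2 * ‖v‖), by positivity, fun w hw => ?_⟩
    have hw' : ‖w‖ ≤ ‖v + w‖ + ‖v‖ := by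
      simpa using norm_sub_le (v + w) v
    rw [div_mul_eq_mul_div, div_le_iff₀ (by positivity)]
    nlinarith [hS w hw]
  · rintro ⟨c, hc, hS⟩
    exact ⟨c * ‖v‖, by positivity, fun w hw =>
      (mul_le_mul_of_nonneg_left (le_add_of_nonneg_right (norm_nonneg w)) hc.le).trans (hS w hw)⟩

end NormedGroup

theorem mul_norm_add_le_norm_add_iff_div {𝕜 : Type*} [NormedDivisionRing 𝕜] {a b : 𝕜}
    (ha : a ≠ 0) (c : ℝ) :
    c * (‖a‖ + ‖b‖) ≤ ‖a + b‖ ↔ c * (1 + ‖b / a‖) ≤ ‖1 + b / a‖ := by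
  have hsum : ‖a + b‖ = ‖1 + b / a‖ * ‖a‖ := by
    rw [← norm_mul, add_mul, one_mul, div_mul_cancel₀ b ha]
  have hb : ‖b‖ = ‖b / a‖ * ‖a‖ := by rw [← norm_mul, div_mul_cancel₀ b ha]
  rw [hsum, hb, show c * (‖a‖ + ‖b / a‖ * ‖a‖) = c * (1 + ‖b / a‖) * ‖a‖ by ring]
  exact mul_le_mul_iff_of_pos_right (norm_pos_iff.mpr ha)

theorem stmt0 {n : ℕ} (G : Set (Fin n → ℂ))
    (f₁ f₂ : (Fin n → ℂ) → ℂ) (h₁ : ∀ z ∈ G, f₁ z ≠ 0) :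
    ((-1 : ℂ) ∉ closure ((fun z => f₂ z / f₁ z) '' G)) ↔
      ∃ c₀ > (0 : ℝ), ∀ z ∈ G,
        c₀ * (‖f₁ z‖ + ‖f₂ z‖) ≤ ‖f₁ z + f₂ z‖ := by
  rw [neg_notMem_closure_iff_exists_mul_norm_add_le (by simp)]
  simp only [Set.forall_mem_image, norm_one]
  exact exists_congr fun c => and_congr_right fun _ => forall₂_congr fun z hz =>
    (mul_norm_add_le_norm_add_iff_div (h₁ z hz) c).symm
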